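/- arXiv:1201.4086 — 2 statements merged into one kernel-verified Lean document; each statement's English description precedes it below -/
import Mathlib

section
/- Let ν : Σ → [0,∞) be a concave function on the standard simplex Σ = {x ∈ ℝ_+^n : Σ x_j = 1} that is nondecreasing in each variable, and let x⁰ ∈ Σ be a point with all coordinates positive. Then the function ζ(x) = ν(x⁰) · min(x_1/x⁰_1, ..., x_n/x⁰_n) satisfies: ζ is concave, nonnegative, nondecreasing in each variable, ζ(x⁰) = ν(x⁰), and ζ is the smallest such function; in particular if ν(x⁰) = max_{x∈Σ} ν(x), then ζ ≤ ν on Σ. -/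
/-- `ζ(x) = ν(x⁰) · min_j x_j/x⁰_j` is the smallest nonnegative concave function on
the nonnegative orthant, nondecreasing in each variable, with value `ν(x⁰)` at `x⁰ ∈ Σ`;
in particular `ζ ≤ ν` on the simplex `Σ`. -/
theorem stmt_10 (n : ℕ) (hn : 1 ≤ n) (ν : (Fin n → ℝ) → ℝ)
    (hconc : ConcaveOn ℝ {x : Fin n → ℝ | ∀ i, 0 ≤ x i} ν)
    (hnonneg : ∀ x : Fin n → ℝ, (∀ i, 0 ≤ x i) → 0 ≤ ν x)
    (hmono : ∀ x y : Fin n → ℝ, (∀ i, 0 ≤ x i) → (∀ i, x i ≤ y i) → ν x ≤ ν y)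
    (x0 : Fin n → ℝ) (hx0 : ∀ i, 0 < x0 i) (hx0sum : ∑ i, x0 i = 1)
    (ζ : (Fin n → ℝ) → ℝ) (hζ : ζ = fun x => ν x0 * ⨅ j, x j / x0 j) :
    ConcaveOn ℝ {x : Fin n → ℝ | ∀ i, 0 ≤ x i} ζ ∧
    (∀ x : Fin n → ℝ, (∀ i, 0 ≤ x i) → 0 ≤ ζ x) ∧
    (∀ x y : Fin n → ℝ, (∀ i, 0 ≤ x i) → (∀ i, x i ≤ y i) → ζ x ≤ ζ y) ∧
    ζ x0 = ν x0 ∧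
    (∀ g : (Fin n → ℝ) → ℝ, ConcaveOn ℝ {x : Fin n → ℝ | ∀ i, 0 ≤ x i} g →
      (∀ x : Fin n → ℝ, (∀ i, 0 ≤ x i) → 0 ≤ g x) →
      (∀ x y : Fin n → ℝ, (∀ i, 0 ≤ x i) → (∀ i, x i ≤ y i) → g x ≤ g y) →
      g x0 = ν x0 →
      ∀ x : Fin n → ℝ, (∀ i, 0 ≤ x i) → (∑ i, x i) = 1 → ζ x ≤ g x) ∧
    (∀ x : Fin n → ℝ, (∀ i, 0 ≤ x i) → (∑ i, x i) = 1 → ζ x ≤ ν x) := by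
  haveI : Nonempty (Fin n) := ⟨⟨0, hn⟩⟩
  subst hζ
  have hc : 0 ≤ ν x0 := hnonneg x0 fun i => (hx0 i).le
  have hbdd : ∀ x : Fin n → ℝ, BddBelow (Set.range fun j => x j / x0 j) :=
    fun x => (Set.finite_range _).bddBelow
  have hinf_nonneg : ∀ x : Fin n → ℝ, (∀ i, 0 ≤ x i) → 0 ≤ ⨅ j, x j / x0 j :=
    fun x hx => le_ciInf fun j => div_nonneg (hx j) (hx0 j).le
  have hinf_le : ∀ (x : Fin n → ℝ) (j : Fin n), (⨅ j, x j / x0 j) * x0 j ≤ x j := by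
    intro x j
    have h := ciInf_le (hbdd x) j
    calc (⨅ j, x j / x0 j) * x0 j ≤ (x j / x0 j) * x0 j :=
          mul_le_mul_of_nonneg_right h (hx0 j).le
      _ = x j := div_mul_cancel₀ _ (hx0 j).ne'
  -- monotonicity of the infimum
  have hinf_mono : ∀ x y : Fin n → ℝ, (∀ i, x i ≤ y i) →
      (⨅ j, x j / x0 j) ≤ ⨅ j, y j / x0 j := by
    intro x y hxy
    refine le_ciInf fun j => le_trans (ciInf_le (hbdd x) j) ?_
    exact div_le_div_of_nonneg_right (hxy j) (hx0 j).le
  have hsetmem : x0 ∈ {x : Fin n → ℝ | ∀ i, 0 ≤ x i} := fun i => (hx0 i).le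
  have h0mem : (0 : Fin n → ℝ) ∈ {x : Fin n → ℝ | ∀ i, 0 ≤ x i} := fun i => le_refl 0
  have hcvx : Convex ℝ {x : Fin n → ℝ | ∀ i, 0 ≤ x i} := by
    intro x hx y hy a b ha hb hab i
    have := hx i; have := hy i
    simp only [Pi.add_apply, Pi.smul_apply, smul_eq_mul]
    positivity
  -- key minimality lemma
  have key : ∀ g : (Fin n → ℝ) → ℝ, ConcaveOn ℝ {x : Fin n → ℝ | ∀ i, 0 ≤ x i} g →
      (∀ x : Fin n → ℝ, (∀ i, 0 ≤ x i) → 0 ≤ g x) →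
      (∀ x y : Fin n → ℝ, (∀ i, 0 ≤ x i) → (∀ i, x i ≤ y i) → g x ≤ g y) →
      g x0 = ν x0 →
      ∀ x : Fin n → ℝ, (∀ i, 0 ≤ x i) → (∑ i, x i) = 1 →
        ν x0 * (⨅ j, x j / x0 j) ≤ g x := by
    intro g hgconc hgnn hgmono hgx0 x hx hsum
    set t := ⨅ j, x j / x0 j with ht
    have ht0 : 0 ≤ t := hinf_nonneg x hx
    have ht1 : t ≤ 1 := by
      have h1 : ∑ j, t * x0 j ≤ ∑ j, x j :=
        Finset.sum_le_sum fun j _ => hinf_le x j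
      rwa [← Finset.mul_sum, hx0sum, mul_one, hsum] at h1
    have hcc := hgconc.2 hsetmem h0mem ht0 (by linarith : (0:ℝ) ≤ 1 - t) (by ring)
    have hmem : (∀ i, 0 ≤ (t • x0 + (1 - t) • (0 : Fin n → ℝ)) i) := by
      intro i
      simp only [Pi.add_apply, Pi.smul_apply, Pi.zero_apply, smul_eq_mul, mul_zero, add_zero]
      exact mul_nonneg ht0 (hx0 i).le
    have hstep : g (t • x0 + (1 - t) • (0 : Fin n → ℝ)) ≤ g x := by
      apply hgmono _ _ hmem
      intro i
      simp only [Pi.add_apply, Pi.smul_apply, Pi.zero_apply, smul_eq_mul, mul_zero, add_zero]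
      exact hinf_le x i
    have hg0 : 0 ≤ g 0 := hgnn 0 h0mem
    have : ν x0 * t ≤ g (t • x0 + (1 - t) • (0 : Fin n → ℝ)) := by
      have := hcc
      simp only [smul_eq_mul] at this
      nlinarith [this]
    linarith [hstep, this]
  refine ⟨?_, ?_, ?_, ?_, ?_, ?_⟩
  · refine ⟨hcvx, ?_⟩
    intro x hx y hy a b ha hb hab
    simp only [smul_eq_mul]
    have h1 : a * (⨅ j, x j / x0 j) + b * (⨅ j, y j / x0 j) ≤
        ⨅ j, (a • x + b • y) j / x0 j := by
      refine le_ciInf fun j => ?_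
      simp only [Pi.add_apply, Pi.smul_apply, smul_eq_mul, add_div]
      have h2 : (⨅ j, x j / x0 j) ≤ x j / x0 j := ciInf_le (hbdd x) j
      have h3 : (⨅ j, y j / x0 j) ≤ y j / x0 j := ciInf_le (hbdd y) j
      have : a * x j / x0 j = a * (x j / x0 j) := by ring
      rw [this]
      have : b * y j / x0 j = b * (y j / x0 j) := by ring
      rw [this]
      exact add_le_add (mul_le_mul_of_nonneg_left h2 ha) (mul_le_mul_of_nonneg_left h3 hb)
    nlinarith [mul_le_mul_of_nonneg_left h1 hc]
  · intro x hx
    exact mul_nonneg hc (hinf_nonneg x hx)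
  · intro x y hx hxy
    exact mul_le_mul_of_nonneg_left (hinf_mono x y hxy) hc
  · simp only
    have : (⨅ j, x0 j / x0 j) = 1 := by
      have : (fun j => x0 j / x0 j) = fun _ => (1:ℝ) := by
        funext j; exact div_self (hx0 j).ne'
      rw [this, ciInf_const]
    rw [this, mul_one]
  · exact key
  · exact key ν hconc hnonneg hmono rfl
end

section
/- Let n ≥ 1 and c_1,...,c_n > 0. The function e^{-2φ} where φ(z) = max_j c_j log|z_j| is integrable near 0 in ℂ^n if and only if Σ_j 1/c_j > 1. -/
/-!
Layer cake: for `t > 0`, the part of `{e^{-2φ} > t}` in the polydisc of radius `ρ` is, up to the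
coordinate hyperplanes, the polydisc of radii `min(ρ, t^{-1/(2c_j)})`, of volume
`π^n ∏_j min(ρ², t^{-1/c_j})`. This is bounded for small `t` and equals `π^n t^{-Σ_j 1/c_j}`
for large `t`, so the integral is finite iff `∫^∞ t^{-Σ_j 1/c_j} dt` is, i.e. iff
`Σ_j 1/c_j > 1`.
-/

open MeasureTheory Real Set Metric Finset

namespace MaxLogWeight

variable {ι : Type*} [Fintype ι]

lemma ae_forall_ne {α : ι → Type*} [∀ i, MeasureSpace (α i)]
    [∀ i, SigmaFinite (volume : Measure (α i))]
    [∀ i, NullSingletonClass (volume : Measure (α i))]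
    (a : ∀ i, α i) : ∀ᵐ x : ∀ i, α i, ∀ i, x i ≠ a i :=
  ae_all_iff.2 fun i =>
    Measure.tendsto_eval_ae_ae.eventually (compl_mem_ae_iff.2 (measure_singleton (a i)))

lemma volume_pi_ball_complex (a : ι → ℂ) {r : ι → ℝ} (hr : ∀ j, 0 ≤ r j) :
    volume (univ.pi fun j => ball (a j) (r j)) = ENNReal.ofReal (∏ j, π * r j ^ 2) := by
  rw [volume_pi_pi, ENNReal.ofReal_prod_of_nonneg fun j _ => by positivity]
  refine Finset.prod_congr rfl fun j _ => ?_
  rw [Complex.volume_ball, ENNReal.ofReal_mul pi_pos.le, ENNReal.ofReal_pow (hr j), mul_comm,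
    ← NNReal.coe_real_pi, ENNReal.ofReal_coe_nnreal]

lemma lt_exp_neg_two_mul_iSup_iff [Nonempty ι] (a : ι → ℝ) (t : ℝ) :
    t < exp (-2 * ⨆ j, a j) ↔ ∀ j, t < exp (-2 * a j) := by
  obtain ⟨i, hi⟩ := exists_eq_ciSup_of_finite (f := a)
  refine ⟨fun h j => h.trans_le (exp_le_exp.2 ?_), fun h => hi ▸ h i⟩
  linarith [le_ciSup (Finite.bddAbove_range a) j]

lemma lt_exp_neg_two_mul_mul_log_iff {c r t : ℝ} (hc : 0 < c) (hr : 0 < r) (ht : 0 < t) :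
    t < exp (-2 * (c * log r)) ↔ r < t ^ (-(2 * c))⁻¹ := by
  rw [lt_rpow_inv_iff_of_neg hr ht (by linarith), rpow_def_of_pos hr]
  ring_nf

-- Since `log 0 = 0`, this is the paper's `min_j |z_j|^{-2c_j}` only off the coordinate
-- hyperplanes, a null set.
noncomputable def maxLogWeight (c : ι → ℝ) (z : ι → ℂ) : ℝ :=
  exp (-2 * ⨆ j, c j * log ‖z j‖)

lemma measurable_maxLogWeight (c : ι → ℝ) : Measurable (maxLogWeight c) := by
  unfold maxLogWeight
  fun_prop

lemma setOf_lt_maxLogWeight_inter_ball_ae_eq [Nonempty ι] {c : ι → ℝ} (hc : ∀ j, 0 < c j)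
    {t : ℝ} (ht : 0 < t) (ρ : ℝ) :
    ({z | t < maxLogWeight c z} ∩ ball 0 ρ : Set (ι → ℂ))
      =ᵐ[volume] univ.pi fun j => ball 0 (min ρ (t ^ (-(2 * c j))⁻¹)) := by
  rw [Filter.eventuallyEq_set]
  filter_upwards [ae_forall_ne 0] with z hz
  simp only [mem_inter_iff, mem_ofPred_eq, maxLogWeight, lt_exp_neg_two_mul_iSup_iff, ball_pi',
    mem_univ_pi, mem_ball_zero_iff, lt_min_iff, ← forall_and, Pi.zero_apply]
  exact forall_congr' fun j => by
    rw [lt_exp_neg_two_mul_mul_log_iff (hc j) (norm_pos_iff.2 (hz j)) ht, and_comm]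

lemma lintegral_ball_maxLogWeight [Nonempty ι] {c : ι → ℝ} (hc : ∀ j, 0 < c j) {ρ : ℝ}
    (hρ : 0 ≤ ρ) :
    ∫⁻ z in ball 0 ρ, ENNReal.ofReal (maxLogWeight c z)
      = ∫⁻ t in Ioi 0, ENNReal.ofReal (∏ j, π * min ρ (t ^ (-(2 * c j))⁻¹) ^ 2) := by
  rw [lintegral_eq_lintegral_meas_lt _ (f := maxLogWeight c)
    (ae_of_all _ fun z => (exp_pos _).le) (measurable_maxLogWeight c).aemeasurable]
  refine setLIntegral_congr_fun measurableSet_Ioi fun t (ht : 0 < t) => ?_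
  rw [Measure.restrict_apply (measurableSet_lt measurable_const (measurable_maxLogWeight c)),
    measure_congr (setOf_lt_maxLogWeight_inter_ball_ae_eq hc ht ρ),
    volume_pi_ball_complex _ fun j => le_min hρ (rpow_nonneg ht.le _)]

lemma integrableOn_Ioi_prod_min_rpow_iff {a b : ι → ℝ} (ha : ∀ j, a j < 0)
    (hb : ∀ j, 0 < b j) :
    IntegrableOn (fun t : ℝ => ∏ j, min (b j) (t ^ a j)) (Ioi 0) ↔ ∑ j, a j < -1 := by
  set T := 1 + ∑ j, b j ^ (a j)⁻¹
  have hT : 0 < T :=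
    add_pos_of_pos_of_nonneg one_pos (sum_nonneg fun j _ => rpow_nonneg (hb j).le _)
  have hhead : IntegrableOn (fun t : ℝ => ∏ j, min (b j) (t ^ a j)) (Ioc 0 T) := by
    refine Measure.integrableOn_of_bounded (M := ∏ j, b j) measure_Ioc_lt_top.ne
      (by fun_prop) (ae_restrict_of_forall_mem measurableSet_Ioc fun t ht => ?_)
    rw [norm_prod]
    exact Finset.prod_le_prod (fun j _ => norm_nonneg _) fun j _ => by
      rw [norm_of_nonneg (le_min (hb j).le (rpow_nonneg ht.1.le _))]
      exact min_le_left _ _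
  have htail :
      EqOn (fun t : ℝ => ∏ j, min (b j) (t ^ a j)) (fun t => t ^ ∑ j, a j) (Ioi T) := by
    intro t (ht : T < t)
    have ht₀ : 0 < t := hT.trans ht
    dsimp only
    rw [rpow_sum_of_pos ht₀]
    refine Finset.prod_congr rfl fun j _ => min_eq_right ?_
    have hbT : b j ^ (a j)⁻¹ ≤ t := by
      have := Finset.single_le_sum (fun i _ => rpow_nonneg (hb i).le (a i)⁻¹) (mem_univ j)
      linarith
    calc t ^ a j ≤ (b j ^ (a j)⁻¹) ^ a j :=
          rpow_le_rpow_of_nonpos (rpow_pos_of_pos (hb j) _) hbT (ha j).le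
      _ = b j := rpow_inv_rpow (hb j).le (ha j).ne
  rw [← Ioc_union_Ioi_eq_Ioi hT.le, integrableOn_union, and_iff_right hhead,
    integrableOn_congr_fun htail measurableSet_Ioi, integrableOn_Ioi_rpow_iff hT]

lemma min_sq_rpow_inv_neg_two_mul {ρ c t : ℝ} (hρ : 0 ≤ ρ) (hc : 0 < c) (ht : 0 < t) :
    min ρ (t ^ (-(2 * c))⁻¹) ^ 2 = min (ρ ^ 2) (t ^ (-c⁻¹)) := by
  have hsq : (t ^ (-(2 * c))⁻¹) ^ 2 = t ^ (-c⁻¹) := by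
    rw [← rpow_mul_natCast ht.le]
    congr 1
    field_simp
    ring
  rw [← hsq]
  rcases le_total ρ (t ^ (-(2 * c))⁻¹) with h | h
  · rw [min_eq_left h, min_eq_left (pow_le_pow_left₀ hρ h 2)]
  · rw [min_eq_right h, min_eq_right (pow_le_pow_left₀ (rpow_nonneg ht.le _) h 2)]

lemma integrableOn_ball_maxLogWeight_iff [Nonempty ι] {c : ι → ℝ} (hc : ∀ j, 0 < c j)
    {ρ : ℝ} (hρ : 0 < ρ) :
    IntegrableOn (maxLogWeight c) (ball 0 ρ) ↔ 1 < ∑ j, 1 / c j := by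
  have hfactor : EqOn (fun t : ℝ => ∏ j, π * min ρ (t ^ (-(2 * c j))⁻¹) ^ 2)
      (fun t => π ^ Fintype.card ι * ∏ j, min (ρ ^ 2) (t ^ (-(c j)⁻¹))) (Ioi 0) := by
    intro t (ht : 0 < t)
    simp only [Finset.prod_mul_distrib, prod_const, card_univ,
      min_sq_rpow_inv_neg_two_mul hρ.le (hc _) ht]
  rw [IntegrableOn, ← lintegral_ofReal_ne_top_iff_integrable
      (measurable_maxLogWeight c).aestronglyMeasurable (ae_of_all _ fun z => (exp_pos _).le),
    lintegral_ball_maxLogWeight hc hρ.le,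
    lintegral_ofReal_ne_top_iff_integrable (by fun_prop) (ae_of_all _ fun t => by positivity),
    ← IntegrableOn, integrableOn_congr_fun hfactor measurableSet_Ioi, IntegrableOn,
    integrable_const_mul_iff (pow_pos pi_pos _).ne'.isUnit, ← IntegrableOn,
    integrableOn_Ioi_prod_min_rpow_iff (fun j => neg_neg_of_pos (inv_pos.2 (hc j)))
      fun _ => pow_pos hρ 2, sum_neg_distrib, neg_lt_neg_iff]
  simp only [one_div]

end MaxLogWeight

open MaxLogWeight

/-- For `φ(z) = max_j c_j log|z_j|` with `c_j > 0`, `e^{-2φ}` is integrable near `0`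
in `ℂ^n` if and only if `Σ_j 1/c_j > 1`. -/
theorem stmt_11 (n : ℕ) (hn : 1 ≤ n) (c : Fin n → ℝ) (hc : ∀ j, 0 < c j) :
    (∃ U ∈ nhds (0 : Fin n → ℂ),
      IntegrableOn
        (fun z : Fin n → ℂ =>
          Real.exp (-2 * ⨆ j, c j * Real.log ‖z j‖)) U volume) ↔
    1 < ∑ j, 1 / c j := by
  have : Nonempty (Fin n) := ⟨⟨0, hn⟩⟩
  refine ⟨fun ⟨U, hU, hf⟩ => ?_, fun hS => ?_⟩
  · obtain ⟨ρ, hρ, hρU⟩ := Metric.mem_nhds_iff.1 hU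
    exact (integrableOn_ball_maxLogWeight_iff hc hρ).1 (hf.mono_set hρU)
  · exact ⟨_, ball_mem_nhds 0 one_pos, (integrableOn_ball_maxLogWeight_iff hc one_pos).2 hS⟩
end
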